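/- Let N ≥ 1, let x_1 < … < x_N be real numbers and β ∈ ℝ^N, and suppose that Σ_{i=1}^N β_i x_i^m = ∫_ℝ y^m dγ(y) for every integer 0 ≤ m ≤ 2N − 1, where γ is the standard Gaussian measure on ℝ (mean 0, variance 1). Then (x, β) satisfies the stationary Gauss–Galerkin equations with drift a(y) = −y, diffusion b ≡ 1 and parameter σ = √2. (In particular, the Gauss–Hermite quadrature of the stationary Gaussian law of the Ornstein–Uhlenbeck process, whose nodes are the roots of the degree-N probabilists' Hermite polynomial, is a stationary solution of the Gauss–Galerkin equations.) -/

import Mathlib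

open Finset

/-- `l'_{ii} = ∑_{k≠i} 1/(x_i − x_k)`, the derivative of the `i`-th Lagrange basis
polynomial at its own node. -/
noncomputable def lpDiag {N : ℕ} (x : Fin N → ℝ) (i : Fin N) : ℝ :=
  ∑ k ∈ Finset.univ.erase i, 1 / (x i - x k)

/-- `l'_{ij} = (∏_{k≠j}(x_j − x_k)) / ((x_j − x_i)·∏_{k≠i}(x_i − x_k))` for `j ≠ i`,
the derivative of the `i`-th Lagrange basis polynomial at the node `x_j`. -/
noncomputable def lpOff {N : ℕ} (x : Fin N → ℝ) (i j : Fin N) : ℝ :=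
  (∏ k ∈ Finset.univ.erase j, (x j - x k)) /
    ((x j - x i) * ∏ k ∈ Finset.univ.erase i, (x i - x k))

/-- `l''_{ii} = (∑_{k≠i} 1/(x_i − x_k))² − ∑_{k≠i} 1/(x_i − x_k)²`, the second derivative
of the `i`-th Lagrange basis polynomial at its own node. -/
noncomputable def lppDiag {N : ℕ} (x : Fin N → ℝ) (i : Fin N) : ℝ :=
  (∑ k ∈ Finset.univ.erase i, 1 / (x i - x k)) ^ 2 -
    ∑ k ∈ Finset.univ.erase i, 1 / (x i - x k) ^ 2

/-- Right-hand side of the Gauss–Galerkin node equation (the `x`-equation):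
`β_i A_i + σ²(2 β_i b(x_i)² l'_{ii} + ∑_{j≠i} β_j b(x_j)² (x_j − x_i)(l'_{ij})²)`,
where `A_i` is the drift value at node `i` (possibly configuration dependent). -/
noncomputable def ggDriftRHS {N : ℕ} (A : Fin N → ℝ) (b : ℝ → ℝ) (σ : ℝ)
    (x β : Fin N → ℝ) (i : Fin N) : ℝ :=
  β i * A i + σ ^ 2 * (2 * β i * (b (x i)) ^ 2 * lpDiag x i +
    ∑ j ∈ Finset.univ.erase i, β j * (b (x j)) ^ 2 * (x j - x i) * (lpOff x i j) ^ 2)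

/-- Right-hand side of the Gauss–Galerkin weight equation (the `β`-equation):
`2 β_i A_i l'_{ii} + σ²(β_i b(x_i)²((l'_{ii})² + l''_{ii}) + ∑_{j≠i} β_j b(x_j)²(l'_{ij})²)`. -/
noncomputable def ggWeightRHS {N : ℕ} (A : Fin N → ℝ) (b : ℝ → ℝ) (σ : ℝ)
    (x β : Fin N → ℝ) (i : Fin N) : ℝ :=
  2 * β i * A i * lpDiag x i +
    σ ^ 2 * (β i * (b (x i)) ^ 2 * ((lpDiag x i) ^ 2 + lppDiag x i) +
      ∑ j ∈ Finset.univ.erase i, β j * (b (x j)) ^ 2 * (lpOff x i j) ^ 2)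

/-- The stationary Gauss–Galerkin equations with node-dependent drift values `A_i`. -/
def StationaryGGWithDrift {N : ℕ} (A : Fin N → ℝ) (b : ℝ → ℝ) (σ : ℝ)
    (x β : Fin N → ℝ) : Prop :=
  ∀ i, 0 = ggDriftRHS A b σ x β i ∧ 0 = ggWeightRHS A b σ x β i

/-- The stationary Gauss–Galerkin equations with drift `a : ℝ → ℝ`,
diffusion `b : ℝ → ℝ` and parameter `σ`. -/
def StationaryGG {N : ℕ} (a b : ℝ → ℝ) (σ : ℝ) (x β : Fin N → ℝ) : Prop :=
  StationaryGGWithDrift (fun i => a (x i)) b σ x β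

open MeasureTheory ProbabilityTheory

/-!
At node `i` the two Gauss–Galerkin equations read `∑ⱼ βⱼ (L f)(xⱼ) = 0` for the generator
`L f = a f' + (σ²/2) b² f''` and the test polynomials `f = ℓᵢ²` and `f = (X − xᵢ) ℓᵢ²`, where `ℓᵢ`
is the `i`-th Lagrange basis polynomial of the nodes: `l'` and `l''` are the values of `ℓᵢ'` and
`ℓᵢ''` at the nodes, computed from the logarithmic derivative of `∏_{k ≠ i} (X − xₖ)`.
For the Ornstein–Uhlenbeck generator `L f = f'' − X f'` both test polynomials, and hence `L f`,
have degree at most `2N − 1`, so the quadrature reproduces `∫ L f dγ`, which vanishes by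
Stein's identity `∫ q' dγ = ∫ y q(y) dγ`.
-/

open Polynomial Real

theorem Set.InjOn.ne_of_mem_erase {α ι : Type*} [DecidableEq ι] {s : Finset ι} {v : ι → α}
    {i : ι} (hvs : Set.InjOn v s) (hi : i ∈ s) : ∀ k ∈ s.erase i, v i ≠ v k := fun _ hk =>
  (hvs.ne_iff hi (mem_of_mem_erase hk)).mpr (Finset.ne_of_mem_erase hk).symm

namespace Lagrange

variable {F : Type*} [Field F] {ι : Type*} [DecidableEq ι] {s : Finset ι} {v : ι → F}

theorem eval_derivative_nodal_of_forall_ne {t : F} (ht : ∀ k ∈ s, t ≠ v k) :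
    (derivative (nodal s v)).eval t = (nodal s v).eval t * ∑ k ∈ s, 1 / (t - v k) := by
  induction s using Finset.induction_on with
  | empty => simp
  | insert a s ha ih =>
    have hta : t - v a ≠ 0 := sub_ne_zero.mpr (ht a (mem_insert_self a s))
    rw [nodal_insert_eq_nodal ha, sum_insert ha]
    simp only [derivative_mul, derivative_sub, derivative_X, derivative_C, sub_zero, one_mul,
      eval_add, eval_mul, eval_sub, eval_X, eval_C]
    rw [ih fun k hk => ht k (mem_insert_of_mem hk)]
    field_simp

theorem eval_derivative_derivative_nodal_of_forall_ne {t : F} (ht : ∀ k ∈ s, t ≠ v k) :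
    (derivative (derivative (nodal s v))).eval t = (nodal s v).eval t *
      ((∑ k ∈ s, 1 / (t - v k)) ^ 2 - ∑ k ∈ s, 1 / (t - v k) ^ 2) := by
  induction s using Finset.induction_on with
  | empty => simp
  | insert a s ha ih =>
    have hta : t - v a ≠ 0 := sub_ne_zero.mpr (ht a (mem_insert_self a s))
    have hs : ∀ k ∈ s, t ≠ v k := fun k hk => ht k (mem_insert_of_mem hk)
    rw [nodal_insert_eq_nodal ha, sum_insert ha, sum_insert ha]
    simp only [derivative_mul, derivative_add, derivative_sub, derivative_X, derivative_C,
      sub_zero, one_mul, eval_add, eval_mul, eval_sub, eval_X, eval_C]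
    rw [ih hs, eval_derivative_nodal_of_forall_ne hs]
    field_simp
    ring

theorem basis_eq_C_nodalWeight_mul_nodal_erase {i : ι} (hi : i ∈ s) :
    Lagrange.basis s v i = C (nodalWeight s v i) * nodal (s.erase i) v := by
  rw [basis_eq_prod_sub_inv_mul_nodal_div hi, nodal_erase_eq_nodal_div hi]

variable {i j : ι}

theorem nodalWeight_mul_eval_nodal_erase (hvs : Set.InjOn v s) (hi : i ∈ s) :
    nodalWeight s v i * (nodal (s.erase i) v).eval (v i) = 1 := by
  rw [nodalWeight_eq_eval_nodal_erase_inv]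
  exact inv_mul_cancel₀ (eval_nodal_not_at_node (hvs.ne_of_mem_erase hi))

theorem eval_derivative_basis_self (hvs : Set.InjOn v s) (hi : i ∈ s) :
    (derivative (Lagrange.basis s v i)).eval (v i) = ∑ k ∈ s.erase i, 1 / (v i - v k) := by
  rw [basis_eq_C_nodalWeight_mul_nodal_erase hi, derivative_C_mul, eval_mul, eval_C,
    eval_derivative_nodal_of_forall_ne (hvs.ne_of_mem_erase hi), ← mul_assoc,
    nodalWeight_mul_eval_nodal_erase hvs hi, one_mul]

theorem eval_derivative_derivative_basis_self (hvs : Set.InjOn v s) (hi : i ∈ s) :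
    (derivative (derivative (Lagrange.basis s v i))).eval (v i) =
      (∑ k ∈ s.erase i, 1 / (v i - v k)) ^ 2 - ∑ k ∈ s.erase i, 1 / (v i - v k) ^ 2 := by
  rw [basis_eq_C_nodalWeight_mul_nodal_erase hi, derivative_C_mul, derivative_C_mul, eval_mul,
    eval_C, eval_derivative_derivative_nodal_of_forall_ne (hvs.ne_of_mem_erase hi),
    ← mul_assoc, nodalWeight_mul_eval_nodal_erase hvs hi, one_mul]

theorem eval_derivative_basis_of_ne (hvs : Set.InjOn v s) (hi : i ∈ s) (hj : j ∈ s)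
    (hij : i ≠ j) :
    (derivative (Lagrange.basis s v i)).eval (v j) =
      (∏ k ∈ s.erase j, (v j - v k)) / ((v j - v i) * ∏ k ∈ s.erase i, (v i - v k)) := by
  have hji : v j - v i ≠ 0 := sub_ne_zero.mpr fun h => hij (hvs hi hj h.symm)
  rw [basis_eq_C_nodalWeight_mul_nodal_erase hi, derivative_C_mul, eval_mul, eval_C,
    eval_nodal_derivative_eval_node_eq (mem_erase.mpr ⟨hij.symm, hj⟩), eval_nodal,
    nodalWeight, prod_inv_distrib, ← mul_prod_erase (s.erase j) (fun k => v j - v k)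
      (mem_erase.mpr ⟨hij, hi⟩), erase_right_comm]
  field_simp

end Lagrange

lemma integrable_pow_mul_exp_neg_sq_div_two (n : ℕ) :
    Integrable fun y : ℝ => y ^ n * exp (-y ^ 2 / 2) := by
  refine (integrable_rpow_mul_exp_neg_mul_sq (b := 1 / 2) (by norm_num) (s := n)
    (by linarith [n.cast_nonneg (α := ℝ)])).congr (ae_of_all _ fun y => ?_)
  simp only [rpow_natCast]
  ring_nf

lemma integrable_eval_mul_exp_neg_sq_div_two (p : ℝ[X]) :
    Integrable fun y : ℝ => p.eval y * exp (-y ^ 2 / 2) := by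
  induction p using Polynomial.induction_on' with
  | add p q hp hq =>
    simp only [eval_add, add_mul]
    exact hp.add hq
  | monomial n a =>
    simpa only [eval_monomial, mul_assoc] using
      (integrable_pow_mul_exp_neg_sq_div_two n).const_mul a

lemma hasDerivAt_eval_mul_exp_neg_sq_div_two (q : ℝ[X]) (y : ℝ) :
    HasDerivAt (fun y => q.eval y * exp (-y ^ 2 / 2))
      ((derivative q - X * q).eval y * exp (-y ^ 2 / 2)) y := by
  have hexp : HasDerivAt (fun y : ℝ => exp (-y ^ 2 / 2)) (exp (-y ^ 2 / 2) * -y) y :=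
    (((hasDerivAt_pow 2 y).fun_neg.div_const 2).congr_deriv (by norm_num; ring)).exp
  refine ((q.hasDerivAt y).mul hexp).congr_deriv ?_
  simp only [eval_sub, eval_mul, eval_X]
  ring

theorem integral_eval_derivative_sub_X_mul_gaussianReal (q : ℝ[X]) :
    ∫ y, (derivative q - X * q).eval y ∂gaussianReal 0 1 = 0 := by
  have hpdf (y : ℝ) : gaussianPDFReal 0 1 y = (√(2 * π))⁻¹ * exp (-y ^ 2 / 2) := by
    simp [gaussianPDFReal]
  simp_rw [integral_gaussianReal_eq_integral_smul one_ne_zero, hpdf, smul_eq_mul, mul_assoc,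
    integral_const_mul, mul_comm (exp _)]
  rw [integral_eq_zero_of_hasDerivAt_of_integrable (hasDerivAt_eval_mul_exp_neg_sq_div_two q)
    (integrable_eval_mul_exp_neg_sq_div_two _) (integrable_eval_mul_exp_neg_sq_div_two q),
    mul_zero]

lemma integrable_pow_gaussianReal (μ : ℝ) (v : NNReal) (n : ℕ) :
    Integrable (fun y => y ^ n) (gaussianReal μ v) := by
  refine ((memLp_id_gaussianReal n).integrable_norm_pow').mono' (by fun_prop)
    (ae_of_all _ fun y => ?_)
  simp [norm_pow]

lemma sum_mul_eval_eq_integral_of_moments {ι : Type*} [Fintype ι] {μ : Measure ℝ} {n : ℕ}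
    (w x : ι → ℝ) (hint : ∀ m ≤ n, Integrable (fun y => y ^ m) μ)
    (hmom : ∀ m ≤ n, ∑ i, w i * x i ^ m = ∫ y, y ^ m ∂μ) {p : ℝ[X]} (hp : p.natDegree ≤ n) :
    ∑ i, w i * p.eval (x i) = ∫ y, p.eval y ∂μ := by
  have hle : ∀ m ∈ range (n + 1), m ≤ n := fun m hm => Nat.lt_succ_iff.mp (mem_range.mp hm)
  simp_rw [eval_eq_sum_range' (Nat.lt_succ_of_le hp)]
  rw [integral_finsetSum _ fun m hm => (hint m (hle m hm)).const_mul _]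
  simp_rw [mul_sum]
  rw [sum_comm]
  refine sum_congr rfl fun m hm => ?_
  rw [integral_const_mul, ← hmom m (hle m hm), mul_sum]
  exact sum_congr rfl fun i _ => by ring

lemma natDegree_derivative_derivative_sub_X_mul_derivative_le {R : Type*} [CommRing R]
    (f : R[X]) : (derivative (derivative f) - X * derivative f).natDegree ≤ f.natDegree := by
  refine (natDegree_sub_le _ _).trans (max_le ?_ ?_)
  · have := natDegree_derivative_le (derivative f)
    have := natDegree_derivative_le f
    omega
  · rcases eq_or_ne f.natDegree 0 with hf | hf
    · simp [derivative_of_natDegree_zero hf]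
    · exact (natDegree_mul_le.trans (add_le_add natDegree_X_le (natDegree_derivative_le f))).trans
        (by omega)

noncomputable def ggGeneratorSum {N : ℕ} (A : Fin N → ℝ) (b : ℝ → ℝ) (σ : ℝ) (x β : Fin N → ℝ)
    (f : ℝ[X]) : ℝ :=
  ∑ j, β j * (A j * (derivative f).eval (x j) +
    σ ^ 2 / 2 * b (x j) ^ 2 * (derivative (derivative f)).eval (x j))

section GeneratorSum

variable {N : ℕ} {x : Fin N → ℝ}

theorem eval_derivative_basis_self_eq_lpDiag (hx : Function.Injective x) (i : Fin N) :
    (derivative (Lagrange.basis univ x i)).eval (x i) = lpDiag x i :=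
  Lagrange.eval_derivative_basis_self hx.injOn (mem_univ i)

theorem eval_derivative_derivative_basis_self_eq_lppDiag (hx : Function.Injective x)
    (i : Fin N) :
    (derivative (derivative (Lagrange.basis univ x i))).eval (x i) = lppDiag x i :=
  Lagrange.eval_derivative_derivative_basis_self hx.injOn (mem_univ i)

theorem eval_derivative_basis_of_ne_eq_lpOff (hx : Function.Injective x) {i j : Fin N}
    (hij : i ≠ j) :
    (derivative (Lagrange.basis univ x i)).eval (x j) = lpOff x i j :=
  Lagrange.eval_derivative_basis_of_ne hx.injOn (mem_univ i) (mem_univ j) hij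

variable (A : Fin N → ℝ) (b : ℝ → ℝ) (σ : ℝ) (β : Fin N → ℝ)

theorem ggWeightRHS_eq_ggGeneratorSum (hx : Function.Injective x) (i : Fin N) :
    ggWeightRHS A b σ x β i = ggGeneratorSum A b σ x β (Lagrange.basis univ x i ^ 2) := by
  have hoff : ∀ j ∈ univ.erase i,
      β j * (A j * (derivative (Lagrange.basis univ x i ^ 2)).eval (x j) +
        σ ^ 2 / 2 * b (x j) ^ 2 *
          (derivative (derivative (Lagrange.basis univ x i ^ 2))).eval (x j))
      = σ ^ 2 * (β j * b (x j) ^ 2 * lpOff x i j ^ 2) := fun j hj => by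
    simp only [derivative_sq, derivative_mul, derivative_C, zero_mul, zero_add, eval_add,
      eval_mul, eval_C, Lagrange.eval_basis_of_ne (ne_of_mem_erase hj).symm (mem_univ j),
      eval_derivative_basis_of_ne_eq_lpOff hx (ne_of_mem_erase hj).symm]
    ring
  rw [ggGeneratorSum, ← add_sum_erase _ _ (mem_univ i), sum_congr rfl hoff, ← mul_sum]
  simp only [derivative_sq, derivative_mul, derivative_C, zero_mul, zero_add, eval_add,
    eval_mul, eval_C, Lagrange.eval_basis_self hx.injOn (mem_univ i),
    eval_derivative_basis_self_eq_lpDiag hx, eval_derivative_derivative_basis_self_eq_lppDiag hx,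
    ggWeightRHS]
  ring

theorem ggDriftRHS_eq_ggGeneratorSum (hx : Function.Injective x) (i : Fin N) :
    ggDriftRHS A b σ x β i =
      ggGeneratorSum A b σ x β ((X - C (x i)) * Lagrange.basis univ x i ^ 2) := by
  have hoff : ∀ j ∈ univ.erase i,
      β j * (A j * (derivative ((X - C (x i)) * Lagrange.basis univ x i ^ 2)).eval (x j) +
        σ ^ 2 / 2 * b (x j) ^ 2 *
          (derivative (derivative ((X - C (x i)) * Lagrange.basis univ x i ^ 2))).eval (x j))
      = σ ^ 2 * (β j * b (x j) ^ 2 * (x j - x i) * lpOff x i j ^ 2) := fun j hj => by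
    simp only [derivative_sq, derivative_mul, derivative_add, derivative_sub, derivative_X,
      derivative_C, zero_mul, zero_add, eval_add, eval_mul, eval_C, eval_sub, eval_X, eval_pow,
      Lagrange.eval_basis_of_ne (ne_of_mem_erase hj).symm (mem_univ j),
      eval_derivative_basis_of_ne_eq_lpOff hx (ne_of_mem_erase hj).symm]
    ring
  rw [ggGeneratorSum, ← add_sum_erase _ _ (mem_univ i), sum_congr rfl hoff, ← mul_sum]
  simp only [derivative_sq, derivative_mul, derivative_add, derivative_sub, derivative_X,
    derivative_C, derivative_one, derivative_zero, zero_mul, zero_add, eval_add, eval_mul,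
    eval_C, eval_sub, eval_X, eval_pow, eval_one, eval_zero,
    Lagrange.eval_basis_self hx.injOn (mem_univ i), eval_derivative_basis_self_eq_lpDiag hx,
    eval_derivative_derivative_basis_self_eq_lppDiag hx, ggDriftRHS]
  ring

end GeneratorSum

theorem ggGeneratorSum_ornsteinUhlenbeck {N : ℕ} (x β : Fin N → ℝ) (f : ℝ[X]) :
    ggGeneratorSum (fun j => -x j) (fun _ => 1) √2 x β f =
      ∑ j, β j * (derivative (derivative f) - X * derivative f).eval (x j) := by
  refine sum_congr rfl fun j _ => ?_
  simp only [eval_sub, eval_mul, eval_X, sq_sqrt zero_le_two]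
  ring

theorem ggGeneratorSum_ornsteinUhlenbeck_eq_zero {N n : ℕ} {x β : Fin N → ℝ}
    (hmom : ∀ m ≤ n, ∑ i, β i * x i ^ m = ∫ y, y ^ m ∂gaussianReal 0 1) {f : ℝ[X]}
    (hf : f.natDegree ≤ n) :
    ggGeneratorSum (fun j => -x j) (fun _ => 1) √2 x β f = 0 := by
  rw [ggGeneratorSum_ornsteinUhlenbeck, sum_mul_eval_eq_integral_of_moments β x
    (fun m _ => integrable_pow_gaussianReal 0 1 m) hmom
    ((natDegree_derivative_derivative_sub_X_mul_derivative_le f).trans hf),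
    integral_eval_derivative_sub_X_mul_gaussianReal]

theorem gaussHermite_stationaryGG_general {N : ℕ} (x β : Fin N → ℝ)
    (hx : StrictMono x)
    (hmom : ∀ m : ℕ, m ≤ 2 * N - 1 →
      ∑ i, β i * x i ^ m = ∫ y, y ^ m ∂(gaussianReal 0 1)) :
    StationaryGG (fun y => -y) (fun _ => 1) (Real.sqrt 2) x β := by
  intro i
  have hN : 0 < N := i.pos
  have hdeg : (Lagrange.basis univ x i ^ 2).natDegree ≤ 2 * (N - 1) := by
    refine natDegree_pow_le.trans (le_of_eq ?_)
    rw [Lagrange.natDegree_basis hx.injective.injOn (mem_univ i), card_univ, Fintype.card_fin]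
  constructor
  · rw [ggDriftRHS_eq_ggGeneratorSum _ _ _ _ hx.injective,
      ggGeneratorSum_ornsteinUhlenbeck_eq_zero hmom]
    exact (natDegree_mul_le.trans (add_le_add (natDegree_X_sub_C_le _) hdeg)).trans (by omega)
  · rw [ggWeightRHS_eq_ggGeneratorSum _ _ _ _ hx.injective,
      ggGeneratorSum_ornsteinUhlenbeck_eq_zero hmom]
    exact hdeg.trans (by omega)

/-- **Gauss–Hermite quadrature is a stationary Gauss–Galerkin solution for the
Ornstein–Uhlenbeck process.** If the `N`-point configuration `(x, β)` with ordered nodes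
reproduces the moments of the standard Gaussian measure up to order `2N − 1`, then it
satisfies the stationary Gauss–Galerkin equations with drift `a(y) = −y`, diffusion
`b ≡ 1` and parameter `σ = √2`. -/
theorem gaussHermite_stationaryGG {N : ℕ} (hN : 1 ≤ N) (x β : Fin N → ℝ)
    (hx : StrictMono x)
    (hmom : ∀ m : ℕ, m ≤ 2 * N - 1 →
      ∑ i, β i * x i ^ m = ∫ y, y ^ m ∂(gaussianReal 0 1)) :
    StationaryGG (fun y => -y) (fun _ => 1) (Real.sqrt 2) x β :=
  gaussHermite_stationaryGG_general x β hx hmom
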